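/- Let k be a subfield of a field f and let G be a subgroup of the multiplicative group f* such that k* ≤ G. Assume that the quotient group G/k* is torsion; that k contains a primitive 4th root of unity whenever G/k* has an element of order 4; that for every prime p lying both in π(t(G)) and in π(G/k*) the field k contains a primitive p-th root of unity; and that the characteristic of k does not belong to π(G/k*). If |G/k*| = p^m for a prime p and a nonnegative integer m, then [k(G):k] = p^m. -/

import Mathlib

/-!
Let `g ∈ G` have class of order `p ^ e` in `G/k*`, so that `a := g ^ p ^ e ∈ k`. By induction
on `e`, `X ^ p ^ e - a` is irreducible: if `X ^ p - g ^ p` had a root `b` in `k(g ^ p)`, then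
`c := N(b)` would satisfy `c ^ p = ±a`, and `ζ := g ^ p ^ (e - 1) / c ∈ G ∖ k*` would satisfy
`ζ ^ p = 1` or `ζ ^ 2 = -1`; the roots-of-unity hypotheses put such a `ζ` into `k`.

So every `g ∉ k*` is separable (the characteristic is not `p`) and has trace zero in `k(G)`.
For representatives `r_q` of `G/k*` this gives `Tr(r_q / r_q') = 0` when `q ≠ q'`, while
`Tr 1 ≠ 0`, as otherwise the trace would vanish on `G`, hence on `k(G)`, against separability.
Applying `Tr(· / r_q)` to a linear relation shows that the `r_q` are linearly independent, and
they span `k(G)`.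
-/

/-- The image of `Kˣ` in `Fˣ` under the algebra map, i.e. the subgroup `k*` of `f*`. -/
def fieldUnitsRange (K F : Type*) [Field K] [Field F] [Algebra K F] : Subgroup Fˣ :=
  (Units.map (algebraMap K F : K →+* F).toMonoidHom).range

open Polynomial IntermediateField

theorem orderOf_pow_prime_pow {M : Type*} [Monoid M] {x : M} {p e j : ℕ} (hp : p.Prime)
    (hx : orderOf x = p ^ e) (hj : j ≤ e) : orderOf (x ^ p ^ j) = p ^ (e - j) := by
  rw [orderOf_pow_of_dvd (pow_ne_zero j hp.ne_zero) (hx ▸ pow_dvd_pow p hj), hx,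
    Nat.pow_div hj hp.pos]

section Binomial

variable {K : Type*} [Field K]

theorem nextCoeff_X_pow_sub_C {R : Type*} [Ring R] [Nontrivial R] {n : ℕ} (hn : 1 < n) (a : R) :
    (X ^ n - C a).nextCoeff = 0 := by
  rw [nextCoeff_of_natDegree_pos (by rw [natDegree_X_pow_sub_C]; omega), natDegree_X_pow_sub_C,
    coeff_sub, coeff_X_pow, coeff_C, if_neg (by omega), if_neg (by omega), sub_zero]

theorem separable_X_pow_prime_pow_sub_C {p : ℕ} (hp : p.Prime) (hK : ringChar K ≠ p) (e : ℕ)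
    {a : K} (ha : a ≠ 0) : (X ^ p ^ e - C a).Separable := by
  refine separable_X_pow_sub_C a ?_ ha
  rw [Nat.cast_pow]
  refine pow_ne_zero e fun h ↦ ?_
  rcases (Nat.dvd_prime hp).mp ((CharP.cast_eq_zero_iff K (ringChar K) p).mp h) with h1 | h1
  · exact CharP.ringChar_ne_one h1
  · exact hK h1

/-- `(-1) ^ p ^ e * -a` is the norm of a root of `X ^ p ^ e - a`. -/
theorem X_pow_prime_pow_succ_sub_C_irreducible {p e : ℕ} (hp : p.Prime) {a : K}
    (ha : Irreducible (X ^ p ^ e - C a)) (hc : ∀ c : K, c ^ p ≠ (-1) ^ p ^ e * -a) :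
    Irreducible (X ^ p ^ (e + 1) - C a) := by
  rw [pow_succ']
  refine X_pow_mul_sub_C_irreducible ha fun E _ _ x hx ↦ ?_
  have hx_int : IsIntegral K x := by
    by_contra h
    rw [minpoly.eq_zero h] at hx
    simpa [natDegree_X_pow_sub_C, (pow_pos hp.pos e).ne] using congrArg natDegree hx
  refine X_pow_sub_C_irreducible_of_prime hp fun b hb ↦ hc (Algebra.norm K b) ?_
  rw [← map_pow, hb, ← adjoin.powerBasis_gen hx_int,
    Algebra.PowerBasis.norm_gen_eq_coeff_zero_minpoly]
  simp [minpoly_gen, hx, (pow_pos hp.pos e).ne]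

end Binomial

section TraceForm

variable {K L ι : Type*} [Field K] [Field L] [Algebra K L]

theorem linearIndependent_of_trace_mul_inv_eq_zero {v : ι → L} (hv : ∀ i, v i ≠ 0)
    (htr : ∀ i j, i ≠ j → Algebra.trace K L (v i * (v j)⁻¹) = 0)
    (h1 : Algebra.trace K L 1 ≠ 0) : LinearIndependent K v := by
  rw [linearIndependent_iff']
  intro s c hs i hi
  have := congrArg (fun x ↦ Algebra.trace K L (x * (v i)⁻¹)) hs
  simp only [Finset.sum_mul, smul_mul_assoc, map_sum, map_smul, zero_mul, map_zero] at this
  rw [Finset.sum_eq_single i (fun j _ hj ↦ by rw [htr j i hj, smul_zero]) (absurd hi),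
    mul_inv_cancel₀ (hv i), smul_eq_mul] at this
  exact (mul_eq_zero.mp this).resolve_right h1

theorem trace_one_ne_zero_of_span_eq_top [FiniteDimensional K L] [Algebra.IsSeparable K L]
    {s : Set L} (hs : Submodule.span K s = ⊤)
    (h : ∀ x ∈ s, x ∈ Set.range (algebraMap K L) ∨ Algebra.trace K L x = 0) :
    Algebra.trace K L 1 ≠ 0 := by
  intro h1
  refine Algebra.trace_ne_zero K L (LinearMap.ext_on hs fun x hx ↦ ?_)
  rcases h x hx with ⟨k, rfl⟩ | h0
  · simp [Algebra.algebraMap_eq_smul_one, h1]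
  · simpa using h0

end TraceForm

section UnitsQuotient

variable {K F : Type*} [Field K] [Field F] [Algebra K F]

theorem mem_fieldUnitsRange_iff {u : Fˣ} :
    u ∈ fieldUnitsRange K F ↔ ∃ k : K, algebraMap K F k = u := by
  refine ⟨fun ⟨k, hk⟩ ↦ ⟨k, by simp [← hk]⟩, fun ⟨k, hk⟩ ↦ ?_⟩
  have hk0 : k ≠ 0 := by
    rintro rfl
    exact u.ne_zero (by simpa using hk.symm)
  exact ⟨Units.mk0 k hk0, Units.ext (by simpa using hk)⟩

theorem mem_fieldUnitsRange_of_pow_eq_one {n : ℕ} [NeZero n] {ω : K} (hω : IsPrimitiveRoot ω n)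
    {ζ : Fˣ} (hζ : ζ ^ n = 1) : ζ ∈ fieldUnitsRange K F := by
  obtain ⟨i, -, hi⟩ := (hω.map_of_injective (algebraMap K F).injective).eq_pow_of_pow_eq_one
    (ξ := (ζ : F)) (by rw [← Units.val_pow_eq_pow_val, hζ, Units.val_one])
  exact mem_fieldUnitsRange_iff.mpr ⟨ω ^ i, by rw [map_pow, hi]⟩

variable {G : Subgroup Fˣ}

theorem mk_eq_one_iff_mem_fieldUnitsRange {g : G} :
    (g : G ⧸ (fieldUnitsRange K F).subgroupOf G) = 1 ↔ (g : Fˣ) ∈ fieldUnitsRange K F := by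
  rw [QuotientGroup.eq_one_iff, Subgroup.mem_subgroupOf]

theorem mem_fieldUnitsRange_of_pow_prime_eq_one {p : ℕ} (hprime : p.Prime)
    (hp : (∃ g : G, IsOfFinOrder g ∧ p ∣ orderOf g) → ∃ ζ : K, IsPrimitiveRoot ζ p)
    {ζ : Fˣ} (hζG : ζ ∈ G) (hζ : ζ ^ p = 1) : ζ ∈ fieldUnitsRange K F := by
  by_cases hζ1 : ζ = 1
  · exact hζ1 ▸ one_mem _
  have : Fact p.Prime := ⟨hprime⟩
  have hζord : orderOf (⟨ζ, hζG⟩ : G) = p := by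
    rw [Subgroup.orderOf_mk]
    exact orderOf_eq_prime hζ hζ1
  obtain ⟨ω, hω⟩ :=
    hp ⟨⟨ζ, hζG⟩, orderOf_pos_iff.mp (hζord ▸ hprime.pos), hζord.symm.dvd⟩
  exact mem_fieldUnitsRange_of_pow_eq_one hω hζ

theorem pow_ne_neg_one_pow_mul_neg (hKG : fieldUnitsRange K F ≤ G)
    (h4 : (∃ x : G ⧸ (fieldUnitsRange K F).subgroupOf G, orderOf x = 4) →
      ∃ ζ : K, IsPrimitiveRoot ζ 4)
    {p e : ℕ} (hprime : p.Prime)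
    (hp : (∃ g : G, IsOfFinOrder g ∧ p ∣ orderOf g) →
      (∃ x : G ⧸ (fieldUnitsRange K F).subgroupOf G, p ∣ orderOf x ∧ x ≠ 1) →
      ∃ ζ : K, IsPrimitiveRoot ζ p)
    {g : G} (hg : orderOf (g : G ⧸ (fieldUnitsRange K F).subgroupOf G) = p ^ (e + 1))
    {a : K} (ha : algebraMap K F a = ((g : Fˣ) : F) ^ p ^ (e + 1)) (c : K) :
    c ^ p ≠ (-1) ^ p ^ e * -a := by
  intro hc
  set v : G := g ^ p ^ e
  have hv : orderOf (v : G ⧸ (fieldUnitsRange K F).subgroupOf G) = p := by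
    have := orderOf_pow_prime_pow hprime hg e.le_succ
    rwa [← QuotientGroup.mk_pow, Nat.add_sub_cancel_left, pow_one] at this
  have hv_ne : (v : G ⧸ (fieldUnitsRange K F).subgroupOf G) ≠ 1 := fun h ↦
    hprime.ne_one (by rw [← hv, h, orderOf_one])
  have hvp : ((v : Fˣ) : F) ^ p = algebraMap K F a := by
    simp [v, ha, ← pow_mul, ← pow_succ]
  have ha0 : a ≠ 0 := by
    rintro rfl
    exact pow_ne_zero p (v : Fˣ).ne_zero (by rw [hvp, map_zero])
  have hc0 : c ≠ 0 := by
    rintro rfl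
    simp [hprime.ne_zero, ha0] at hc
  set cu : Fˣ := Units.mk0 (algebraMap K F c) (by simpa using hc0)
  have hcu : cu ∈ fieldUnitsRange K F := mem_fieldUnitsRange_iff.mpr ⟨c, rfl⟩
  set ζ : Fˣ := v * cu⁻¹
  suffices hζK : ζ ∈ fieldUnitsRange K F from
    mk_eq_one_iff_mem_fieldUnitsRange.not.mp hv_ne (by simpa [ζ] using mul_mem hζK hcu)
  have hcu_p : cu ^ p = (-1) ^ (p ^ e + 1) * (v : Fˣ) ^ p := Units.ext <| by
    rw [Units.val_pow_eq_pow_val, Units.val_mk0, ← map_pow, hc]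
    simp [hvp, pow_succ]
  have hζp : ζ ^ p = ((-1) ^ (p ^ e + 1))⁻¹ := by
    rw [mul_pow, inv_pow, hcu_p, mul_inv_rev, mul_inv_cancel_left]
  rcases Nat.even_or_odd (p ^ e) with heven | hodd
  · obtain rfl : 2 = p := (Nat.prime_dvd_prime_iff_eq Nat.prime_two hprime).mp
      (Nat.prime_two.dvd_of_dvd_pow heven.two_dvd)
    obtain ⟨e, rfl⟩ : ∃ e', e = e' + 1 :=
      Nat.exists_eq_succ_of_ne_zero (by rintro rfl; simp at heven)
    have h4ord := orderOf_pow_prime_pow (j := e) hprime hg (by omega)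
    rw [show e + 1 + 1 - e = 2 by omega] at h4ord
    obtain ⟨ι, hι⟩ := h4 ⟨_, h4ord⟩
    refine mem_fieldUnitsRange_of_pow_eq_one hι ?_
    rw [show 4 = 2 * 2 from rfl, pow_mul, hζp, inv_pow, ← pow_mul, mul_comm, pow_mul]
    simp
  · rw [hodd.add_one.neg_one_pow, inv_one] at hζp
    exact mem_fieldUnitsRange_of_pow_prime_eq_one hprime (hp · ⟨v, hv.symm.dvd, hv_ne⟩)
      (mul_mem v.2 (inv_mem (hKG hcu))) hζp

theorem irreducible_X_pow_sub_C_of_orderOf_mk (hKG : fieldUnitsRange K F ≤ G)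
    (h4 : (∃ x : G ⧸ (fieldUnitsRange K F).subgroupOf G, orderOf x = 4) →
      ∃ ζ : K, IsPrimitiveRoot ζ 4)
    {p : ℕ} (hprime : p.Prime)
    (hp : (∃ g : G, IsOfFinOrder g ∧ p ∣ orderOf g) →
      (∃ x : G ⧸ (fieldUnitsRange K F).subgroupOf G, p ∣ orderOf x ∧ x ≠ 1) →
      ∃ ζ : K, IsPrimitiveRoot ζ p)
    (e : ℕ) {g : G} (hg : orderOf (g : G ⧸ (fieldUnitsRange K F).subgroupOf G) = p ^ e)
    {a : K} (ha : algebraMap K F a = ((g : Fˣ) : F) ^ p ^ e) :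
    Irreducible (X ^ p ^ e - C a) := by
  induction e generalizing g with
  | zero => simpa using irreducible_X_sub_C a
  | succ e ih =>
    refine X_pow_prime_pow_succ_sub_C_irreducible hprime (ih (g := g ^ p) ?_ ?_)
      (pow_ne_neg_one_pow_mul_neg hKG h4 hprime hp hg ha)
    · simpa using orderOf_pow_prime_pow (j := 1) hprime hg (by omega)
    · simp [ha, ← pow_mul, ← pow_succ']

theorem minpoly_eq_X_pow_sub_C_of_orderOf_mk (hKG : fieldUnitsRange K F ≤ G)
    (h4 : (∃ x : G ⧸ (fieldUnitsRange K F).subgroupOf G, orderOf x = 4) →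
      ∃ ζ : K, IsPrimitiveRoot ζ 4)
    {p : ℕ} (hprime : p.Prime)
    (hp : (∃ g : G, IsOfFinOrder g ∧ p ∣ orderOf g) →
      (∃ x : G ⧸ (fieldUnitsRange K F).subgroupOf G, p ∣ orderOf x ∧ x ≠ 1) →
      ∃ ζ : K, IsPrimitiveRoot ζ p)
    {e : ℕ} {g : G} (hg : orderOf (g : G ⧸ (fieldUnitsRange K F).subgroupOf G) = p ^ e)
    {a : K} (ha : algebraMap K F a = ((g : Fˣ) : F) ^ p ^ e) :
    minpoly K ((g : Fˣ) : F) = X ^ p ^ e - C a :=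
  (minpoly.eq_of_irreducible_of_monic
    (irreducible_X_pow_sub_C_of_orderOf_mk hKG h4 hprime hp e hg ha) (by simp [ha])
    (monic_X_pow_sub_C a (pow_ne_zero e hprime.ne_zero))).symm

theorem exists_minpoly_eq_X_pow_sub_C (hKG : fieldUnitsRange K F ≤ G)
    (h4 : (∃ x : G ⧸ (fieldUnitsRange K F).subgroupOf G, orderOf x = 4) →
      ∃ ζ : K, IsPrimitiveRoot ζ 4)
    {p m : ℕ} (hprime : p.Prime)
    (hp : (∃ g : G, IsOfFinOrder g ∧ p ∣ orderOf g) →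
      (∃ x : G ⧸ (fieldUnitsRange K F).subgroupOf G, p ∣ orderOf x ∧ x ≠ 1) →
      ∃ ζ : K, IsPrimitiveRoot ζ p)
    (hcard : Nat.card (G ⧸ (fieldUnitsRange K F).subgroupOf G) = p ^ m)
    {g : G} (hg : (g : Fˣ) ∉ fieldUnitsRange K F) :
    ∃ e, ∃ a : K, e ≠ 0 ∧ a ≠ 0 ∧
      p ∣ orderOf (g : G ⧸ (fieldUnitsRange K F).subgroupOf G) ∧
      minpoly K ((g : Fˣ) : F) = X ^ p ^ e - C a := by
  obtain ⟨e, -, he⟩ := (Nat.dvd_prime_pow hprime).mp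
    (hcard ▸ orderOf_dvd_natCard (g : G ⧸ (fieldUnitsRange K F).subgroupOf G))
  have hK : ((g ^ p ^ e : G) : Fˣ) ∈ fieldUnitsRange K F := by
    rw [← mk_eq_one_iff_mem_fieldUnitsRange, QuotientGroup.mk_pow, ← he, pow_orderOf_eq_one]
  obtain ⟨a, ha⟩ := mem_fieldUnitsRange_iff.mp hK
  have he0 : e ≠ 0 := by
    rintro rfl
    exact hg (mk_eq_one_iff_mem_fieldUnitsRange.mp (orderOf_eq_one_iff.mp he))
  refine ⟨e, a, he0, ?_, he ▸ dvd_pow_self p he0,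
    minpoly_eq_X_pow_sub_C_of_orderOf_mk hKG h4 hprime hp he (by simp [ha])⟩
  rintro rfl
  exact ((g ^ p ^ e : G) : Fˣ).ne_zero (by rw [← ha, map_zero])

theorem exists_eq_algebraMap_mul_out (g : G) :
    ∃ k : K, ((g : Fˣ) : F) =
      algebraMap K F k * (((g : G ⧸ (fieldUnitsRange K F).subgroupOf G).out : Fˣ) : F) := by
  obtain ⟨h, hh⟩ := QuotientGroup.mk_out_eq_mul ((fieldUnitsRange K F).subgroupOf G) g
  obtain ⟨k, hk⟩ := mem_fieldUnitsRange_iff.mp (inv_mem (Subgroup.mem_subgroupOf.mp h.2))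
  refine ⟨k, ?_⟩
  rw [hh, hk, ← Units.val_mul, Subgroup.coe_mul, mul_comm (g : Fˣ), inv_mul_cancel_left]

theorem toSubmodule_adjoin_eq_span_out (hint : ∀ g : G, IsIntegral K ((g : Fˣ) : F)) :
    Subalgebra.toSubmodule (adjoin K ((fun u : Fˣ => (u : F)) '' (G : Set Fˣ))).toSubalgebra =
      Submodule.span K
        (Set.range fun q : G ⧸ (fieldUnitsRange K F).subgroupOf G ↦ ((q.out : Fˣ) : F)) := by
  have hM : ((G.toSubmonoid.map (Units.coeHom F) : Submonoid F) : Set F) =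
      (fun u : Fˣ => (u : F)) '' (G : Set Fˣ) := Submonoid.coe_map _ _
  rw [adjoin_toSubalgebra_of_isAlgebraic (by
      rintro _ ⟨u, hu, rfl⟩
      exact (hint ⟨u, hu⟩).isAlgebraic),
    Algebra.adjoin_eq_span_of_subset K (by
      rw [← hM, Submonoid.closure_eq]
      exact Submodule.subset_span)]
  refine le_antisymm (Submodule.span_le.mpr ?_) (Submodule.span_mono ?_)
  · rintro _ ⟨u, hu, rfl⟩
    obtain ⟨k, hk : (u : F) = _⟩ := exists_eq_algebraMap_mul_out (K := K) ⟨u, hu⟩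
    rw [SetLike.mem_coe, show (fun u : Fˣ ↦ (u : F)) u = u from rfl, hk, ← Algebra.smul_def]
    exact Submodule.smul_mem _ _ (Submodule.subset_span ⟨_, rfl⟩)
  · rintro _ ⟨q, rfl⟩
    exact ⟨_, q.out.2, rfl⟩

theorem finrank_adjoin_eq_card_quotient [Finite (G ⧸ (fieldUnitsRange K F).subgroupOf G)]
    (hsep : ∀ g : G, IsSeparable K ((g : Fˣ) : F))
    (hnext : ∀ g : G, (g : Fˣ) ∉ fieldUnitsRange K F →
      (minpoly K ((g : Fˣ) : F)).nextCoeff = 0) :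
    Module.finrank K (adjoin K ((fun u : Fˣ => (u : F)) '' (G : Set Fˣ))) =
      Nat.card (G ⧸ (fieldUnitsRange K F).subgroupOf G) := by
  have := Fintype.ofFinite (G ⧸ (fieldUnitsRange K F).subgroupOf G)
  set V := adjoin K ((fun u : Fˣ => (u : F)) '' (G : Set Fˣ))
  have hmem (g : G) : ((g : Fˣ) : F) ∈ V := subset_adjoin K _ ⟨g, g.2, rfl⟩
  set v : G ⧸ (fieldUnitsRange K F).subgroupOf G → V := fun q ↦ ⟨_, hmem q.out⟩
  have hspan : Submodule.span K (Set.range v) = ⊤ := by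
    refine Submodule.map_injective_of_injective (f := V.val.toLinearMap) V.val.injective ?_
    have hrange : LinearMap.range V.val.toLinearMap = Subalgebra.toSubmodule V.toSubalgebra := by
      ext x
      simp
    rw [Submodule.map_span, ← Set.range_comp, Submodule.map_top, hrange,
      toSubmodule_adjoin_eq_span_out fun g ↦ (hsep g).isIntegral]
    rfl
  have : FiniteDimensional K V :=
    Module.finite_def.mpr (hspan ▸ Submodule.fg_span (Set.finite_range v))
  have : Algebra.IsSeparable K V := (isSeparable_adjoin_iff_isSeparable K F).mpr <| by
    rintro _ ⟨u, hu, rfl⟩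
    exact hsep ⟨u, hu⟩
  have htr (g : G) (hg : (g : Fˣ) ∉ fieldUnitsRange K F) :
      Algebra.trace K V ⟨_, hmem g⟩ = 0 := by
    rw [trace_eq_finrank_mul_minpoly_nextCoeff, minpoly_eq, hnext g hg, neg_zero, mul_zero]
  have hv (q) : v q ∈ Set.range (algebraMap K V) ∨ Algebra.trace K V (v q) = 0 := by
    by_cases hq : (q.out : Fˣ) ∈ fieldUnitsRange K F
    · obtain ⟨k, hk⟩ := mem_fieldUnitsRange_iff.mp hq
      exact Or.inl ⟨k, Subtype.ext hk⟩
    · exact Or.inr (htr _ hq)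
  have hli : LinearIndependent K v := by
    refine linearIndependent_of_trace_mul_inv_eq_zero (fun q ↦ ?_) (fun q q' hqq' ↦ ?_)
      (trace_one_ne_zero_of_span_eq_top hspan (by rintro _ ⟨q, rfl⟩; exact hv q))
    · exact Subtype.coe_ne_coe.mp (q.out : Fˣ).ne_zero
    · have hout : ((q.out * (q'.out)⁻¹ : G) : Fˣ) ∉ fieldUnitsRange K F := by
        rw [← mk_eq_one_iff_mem_fieldUnitsRange, QuotientGroup.mk_mul, QuotientGroup.mk_inv,
          QuotientGroup.out_eq', QuotientGroup.out_eq']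
        exact fun h ↦ hqq' (mul_inv_eq_one.mp h)
      convert htr _ hout
      simp [v]
  rw [← finrank_top, ← hspan, finrank_span_eq_card hli, Nat.card_eq_fintype_card]

end UnitsQuotient

theorem degree_adjoin_of_primePow_index_general
    (K F : Type*) [Field K] [Field F] [Algebra K F] (G : Subgroup Fˣ)
    (hKG : fieldUnitsRange K F ≤ G)
    -- k contains a primitive 4th root of unity whenever G/k* has an element of order 4
    (h4 : (∃ x : G ⧸ (fieldUnitsRange K F).subgroupOf G, orderOf x = 4) →
      ∃ ζ : K, IsPrimitiveRoot ζ 4)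
    -- for every prime p in π(t(G)) ∩ π(G/k*), k contains a primitive p-th root of unity
    (hp : ∀ p : ℕ, p.Prime → (∃ g : G, IsOfFinOrder g ∧ p ∣ orderOf g) →
      (∃ x : G ⧸ (fieldUnitsRange K F).subgroupOf G, p ∣ orderOf x ∧ x ≠ 1) →
      ∃ ζ : K, IsPrimitiveRoot ζ p)
    -- the characteristic of k does not belong to π(G/k*)
    (hchar : ∀ p : ℕ, p.Prime →
      (∃ x : G ⧸ (fieldUnitsRange K F).subgroupOf G, p ∣ orderOf x ∧ x ≠ 1) →
      ringChar K ≠ p)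
    -- |G/k*| = p^m for a prime p and a nonnegative integer m
    (p m : ℕ) (hprime : p.Prime)
    (hcard : Nat.card (G ⧸ (fieldUnitsRange K F).subgroupOf G) = p ^ m) :
    Module.finrank K (IntermediateField.adjoin K ((fun u : Fˣ => (u : F)) '' (G : Set Fˣ)))
      = p ^ m := by
  have : Finite (G ⧸ (fieldUnitsRange K F).subgroupOf G) :=
    Nat.finite_of_card_ne_zero (by rw [hcard]; exact pow_ne_zero m hprime.ne_zero)
  refine (finrank_adjoin_eq_card_quotient (fun g ↦ ?_) (fun g hg ↦ ?_)).trans hcard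
  · by_cases hg : (g : Fˣ) ∈ fieldUnitsRange K F
    · obtain ⟨k, hk⟩ := mem_fieldUnitsRange_iff.mp hg
      exact hk ▸ isSeparable_algebraMap k
    obtain ⟨e, a, -, ha, hdvd, hmin⟩ :=
      exists_minpoly_eq_X_pow_sub_C hKG h4 hprime (hp p hprime) hcard hg
    have hK := hchar p hprime ⟨g, hdvd, fun h ↦ hg (mk_eq_one_iff_mem_fieldUnitsRange.mp h)⟩
    rw [IsSeparable, hmin]
    exact separable_X_pow_prime_pow_sub_C hprime hK e ha
  · obtain ⟨e, a, he0, -, -, hmin⟩ :=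
      exists_minpoly_eq_X_pow_sub_C hKG h4 hprime (hp p hprime) hcard hg
    rw [hmin]
    exact nextCoeff_X_pow_sub_C (Nat.one_lt_pow he0 hprime.one_lt) a

/-- Lemma 1.2. -/
theorem degree_adjoin_of_primePow_index
    (K F : Type*) [Field K] [Field F] [Algebra K F] (G : Subgroup Fˣ)
    (hKG : fieldUnitsRange K F ≤ G)
    -- the quotient group G/k* is torsion
    (htors : ∀ x : G ⧸ (fieldUnitsRange K F).subgroupOf G, IsOfFinOrder x)
    -- k contains a primitive 4th root of unity whenever G/k* has an element of order 4
    (h4 : (∃ x : G ⧸ (fieldUnitsRange K F).subgroupOf G, orderOf x = 4) →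
      ∃ ζ : K, IsPrimitiveRoot ζ 4)
    -- for every prime p in π(t(G)) ∩ π(G/k*), k contains a primitive p-th root of unity
    (hp : ∀ p : ℕ, p.Prime → (∃ g : G, IsOfFinOrder g ∧ p ∣ orderOf g) →
      (∃ x : G ⧸ (fieldUnitsRange K F).subgroupOf G, p ∣ orderOf x ∧ x ≠ 1) →
      ∃ ζ : K, IsPrimitiveRoot ζ p)
    -- the characteristic of k does not belong to π(G/k*)
    (hchar : ∀ p : ℕ, p.Prime →
      (∃ x : G ⧸ (fieldUnitsRange K F).subgroupOf G, p ∣ orderOf x ∧ x ≠ 1) →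
      ringChar K ≠ p)
    -- |G/k*| = p^m for a prime p and a nonnegative integer m
    (p m : ℕ) (hprime : p.Prime)
    (hcard : Nat.card (G ⧸ (fieldUnitsRange K F).subgroupOf G) = p ^ m) :
    Module.finrank K (IntermediateField.adjoin K ((fun u : Fˣ => (u : F)) '' (G : Set Fˣ)))
      = p ^ m :=
  degree_adjoin_of_primePow_index_general K F G hKG h4 hp hchar p m hprime hcard
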